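/- arXiv:2305.15339 — 2 statements merged into one kernel-verified Lean document; each statement's English description precedes it below -/
import Mathlib

section
/- Let μ₁,₁ⁿ (n > 3) be the complex algebra with basis e₁,…,eₙ and only nonzero products eᵢeⱼ = e_{i+j} for i+j ≤ n−1. A linear map Δ on μ₁,₁ⁿ is a local derivation if and only if Δ(e₁) ∈ span{e₁,…,eₙ}, Δ(eᵢ) ∈ span{eᵢ,…,e_{n−1}} for 2 ≤ i ≤ n−1, and Δ(eₙ) ∈ span{e_{n−1}, eₙ}. -/
/-!
In the paper's 1-based indexing: if `D` is a derivation then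
`D e_a = D(e_1) e_{a-1} + e_1 D(e_{a-1})` for `2 ≤ a ≤ n-1`, so by induction `D e_a` has no component below `e_a`, and none along `e_n`
because products never have one. Since `e_1 e_n = 0` and `e_n` annihilates everything,
`e_1 D(e_n) = 0`, which kills the components of `D e_n` below `e_{n-1}`.

Conversely, local derivations form a subspace, so it suffices to treat the maps `x ↦ x_a e_k`
for the allowed positions. For `a ∈ {1, n}` and `k ≥ n-1` such a map is itself a derivation.
For `a ≤ k ≤ n-1` and `x_a ≠ 0`, let `m` be the lowest index with `x_m ≠ 0`: the derivations
`e_i ↦ i e_{i+d}` act on `x` triangularly with diagonal `m x_m ≠ 0`, so their values at `x`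
span every `e_k` with `m ≤ k ≤ n-1`.
-/


/-- basis vectors -/
noncomputable def e (n : ℕ) (i : Fin n) : Fin n → ℂ := Pi.single i 1

/-- product of the null-filiform algebra μ₀ⁿ (0-based indices: index a ↔ e_{a+1}) -/
noncomputable def mul0 (n : ℕ) (x y : Fin n → ℂ) : Fin n → ℂ :=
  fun k => ∑ i : Fin n, ∑ j : Fin n,
    if (i : ℕ) + (j : ℕ) + 1 = (k : ℕ) then x i * y j else 0

def IsDer {n : ℕ} (μ : (Fin n → ℂ) → (Fin n → ℂ) → Fin n → ℂ)
    (D : (Fin n → ℂ) →ₗ[ℂ] (Fin n → ℂ)) : Prop :=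
  ∀ x y, D (μ x y) = μ (D x) y + μ x (D y)

def IsLocDer {n : ℕ} (μ : (Fin n → ℂ) → (Fin n → ℂ) → Fin n → ℂ)
    (Δ : (Fin n → ℂ) →ₗ[ℂ] (Fin n → ℂ)) : Prop :=
  ∀ x, ∃ D, IsDer μ D ∧ Δ x = D x

/-- the submodule of derivations, given bilinearity of μ -/
noncomputable def derSubmodule (n : ℕ) (μ : (Fin n → ℂ) → (Fin n → ℂ) → Fin n → ℂ)
    (hal : ∀ x y z, μ (x + y) z = μ x z + μ y z)
    (har : ∀ x y z, μ x (y + z) = μ x y + μ x z)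
    (hsl : ∀ (c : ℂ) x y, μ (c • x) y = c • μ x y)
    (hsr : ∀ (c : ℂ) x y, μ x (c • y) = c • μ x y) :
    Submodule ℂ ((Fin n → ℂ) →ₗ[ℂ] (Fin n → ℂ)) where
  carrier := {D | IsDer μ D}
  zero_mem' := by
    intro x y
    have h1 : μ 0 y = 0 := by simpa using hsl 0 0 y
    have h2 : μ x 0 = 0 := by simpa using hsr 0 x 0
    simp [h1, h2]
  add_mem' := by
    intro D1 D2 h1 h2 x y
    simp only [LinearMap.add_apply, h1 x y, h2 x y, hal, har]
    abel
  smul_mem' := by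
    intro c D hD x y
    simp only [LinearMap.smul_apply, hD x y, smul_add, hsl, hsr]

/-- the submodule of local derivations, given bilinearity of μ -/
noncomputable def locDerSubmodule (n : ℕ) (μ : (Fin n → ℂ) → (Fin n → ℂ) → Fin n → ℂ)
    (hal : ∀ x y z, μ (x + y) z = μ x z + μ y z)
    (har : ∀ x y z, μ x (y + z) = μ x y + μ x z)
    (hsl : ∀ (c : ℂ) x y, μ (c • x) y = c • μ x y)
    (hsr : ∀ (c : ℂ) x y, μ x (c • y) = c • μ x y) :
    Submodule ℂ ((Fin n → ℂ) →ₗ[ℂ] (Fin n → ℂ)) where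
  carrier := {Δ | IsLocDer μ Δ}
  zero_mem' := by
    intro x
    exact ⟨0, (derSubmodule n μ hal har hsl hsr).zero_mem, rfl⟩
  add_mem' := by
    intro D1 D2 h1 h2 x
    obtain ⟨E1, hE1, he1⟩ := h1 x
    obtain ⟨E2, hE2, he2⟩ := h2 x
    exact ⟨E1 + E2, (derSubmodule n μ hal har hsl hsr).add_mem hE1 hE2, by
      simp [he1, he2]⟩
  smul_mem' := by
    intro c Δ hΔ x
    obtain ⟨E, hE, he⟩ := hΔ x
    exact ⟨c • E, (derSubmodule n μ hal har hsl hsr).smul_mem c hE, by simp [he]⟩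

lemma mul0_add_left (n : ℕ) (x y z : Fin n → ℂ) :
    mul0 n (x + y) z = mul0 n x z + mul0 n y z := by
  funext k
  simp only [mul0, Pi.add_apply]
  rw [← Finset.sum_add_distrib]
  refine Finset.sum_congr rfl fun i _ => ?_
  rw [← Finset.sum_add_distrib]
  refine Finset.sum_congr rfl fun j _ => ?_
  split <;> ring

lemma mul0_add_right (n : ℕ) (x y z : Fin n → ℂ) :
    mul0 n x (y + z) = mul0 n x y + mul0 n x z := by
  funext k
  simp only [mul0, Pi.add_apply]
  rw [← Finset.sum_add_distrib]
  refine Finset.sum_congr rfl fun i _ => ?_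
  rw [← Finset.sum_add_distrib]
  refine Finset.sum_congr rfl fun j _ => ?_
  split <;> ring

lemma mul0_smul_left (n : ℕ) (c : ℂ) (x y : Fin n → ℂ) :
    mul0 n (c • x) y = c • mul0 n x y := by
  funext k
  simp only [mul0, Pi.smul_apply, smul_eq_mul, Finset.mul_sum]
  refine Finset.sum_congr rfl fun i _ => ?_
  refine Finset.sum_congr rfl fun j _ => ?_
  split <;> ring

lemma mul0_smul_right (n : ℕ) (c : ℂ) (x y : Fin n → ℂ) :
    mul0 n x (c • y) = c • mul0 n x y := by
  funext k
  simp only [mul0, Pi.smul_apply, smul_eq_mul, Finset.mul_sum]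
  refine Finset.sum_congr rfl fun i _ => ?_
  refine Finset.sum_congr rfl fun j _ => ?_
  split <;> ring


noncomputable def mul11 (n : ℕ) (x y : Fin n → ℂ) : Fin n → ℂ :=
  fun k => ∑ i : Fin n, ∑ j : Fin n,
    if (i : ℕ) + (j : ℕ) + 1 = (k : ℕ) ∧ (k : ℕ) + 2 ≤ n then x i * y j else 0

lemma mul11_add_left (n : ℕ) (x y z : Fin n → ℂ) :
    mul11 n (x + y) z = mul11 n x z + mul11 n y z := by
  funext k
  simp only [mul11, Pi.add_apply]
  rw [← Finset.sum_add_distrib]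
  refine Finset.sum_congr rfl fun i _ => ?_
  rw [← Finset.sum_add_distrib]
  refine Finset.sum_congr rfl fun j _ => ?_
  split <;> ring

lemma mul11_add_right (n : ℕ) (x y z : Fin n → ℂ) :
    mul11 n x (y + z) = mul11 n x y + mul11 n x z := by
  funext k
  simp only [mul11, Pi.add_apply]
  rw [← Finset.sum_add_distrib]
  refine Finset.sum_congr rfl fun i _ => ?_
  rw [← Finset.sum_add_distrib]
  refine Finset.sum_congr rfl fun j _ => ?_
  split <;> ring

lemma mul11_smul_left (n : ℕ) (c : ℂ) (x y : Fin n → ℂ) :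
    mul11 n (c • x) y = c • mul11 n x y := by
  funext k
  simp only [mul11, Pi.smul_apply, smul_eq_mul, Finset.mul_sum]
  refine Finset.sum_congr rfl fun i _ => ?_
  refine Finset.sum_congr rfl fun j _ => ?_
  split <;> ring

lemma mul11_smul_right (n : ℕ) (c : ℂ) (x y : Fin n → ℂ) :
    mul11 n x (c • y) = c • mul11 n x y := by
  funext k
  simp only [mul11, Pi.smul_apply, smul_eq_mul, Finset.mul_sum]
  refine Finset.sum_congr rfl fun i _ => ?_
  refine Finset.sum_congr rfl fun j _ => ?_
  split <;> ring


section Mul11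

variable {n : ℕ}

lemma mul11_comm (x y : Fin n → ℂ) : mul11 n x y = mul11 n y x := by
  funext k
  rw [mul11, mul11, Finset.sum_comm]
  simp only [add_comm (_ : ℕ), mul_comm (x _)]

lemma mul11_apply_eq_zero_of_le (x y : Fin n → ℂ) {k : Fin n} (hk : n ≤ k + 1) :
    mul11 n x y k = 0 :=
  Finset.sum_eq_zero fun _ _ => Finset.sum_eq_zero fun _ _ => if_neg (by omega)

lemma mul11_apply_eq_zero_of_forall_lt (x : Fin n → ℂ) {y : Fin n → ℂ} {k : Fin n}
    (hy : ∀ j < k, y j = 0) : mul11 n x y k = 0 := by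
  refine Finset.sum_eq_zero fun i _ => Finset.sum_eq_zero fun j _ => ?_
  split_ifs with h
  · rw [hy j (Fin.lt_def.2 (by omega)), mul_zero]
  · rfl

lemma mul11_e_apply (x : Fin n → ℂ) (b k : Fin n) :
    mul11 n x (e n b) k =
      if h : b + 1 ≤ (k : ℕ) ∧ (k : ℕ) + 2 ≤ n then x ⟨k - b - 1, by omega⟩ else 0 := by
  have hcol (i : Fin n) :
      (∑ j : Fin n, if (i : ℕ) + j + 1 = k ∧ (k : ℕ) + 2 ≤ n then x i * e n b j else 0) =
        if (i : ℕ) + b + 1 = k ∧ (k : ℕ) + 2 ≤ n then x i else 0 :=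
    (Fintype.sum_eq_single b fun j hj => by simp [e, hj]).trans (by simp [e])
  rw [mul11, Finset.sum_congr rfl fun i _ => hcol i]
  split_ifs with h
  · rw [Fintype.sum_eq_single ⟨k - b - 1, by omega⟩ fun i hi =>
      if_neg fun hi' => hi (by ext; simp; omega)]
    exact if_pos ⟨by simp; omega, h.2⟩
  · exact Finset.sum_eq_zero fun i _ => if_neg fun h' => h ⟨by omega, h'.2⟩

lemma mul11_e_eq_zero (x : Fin n → ℂ) {b : Fin n} (hb : n ≤ b + 2) :
    mul11 n x (e n b) = 0 := by
  funext k
  rw [mul11_e_apply, dif_neg (by omega), Pi.zero_apply]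

lemma mul11_e_e {a b c : Fin n} (h : (a : ℕ) + b + 1 = c) (hc : (c : ℕ) + 2 ≤ n) :
    mul11 n (e n a) (e n b) = e n c := by
  funext k
  rw [mul11_e_apply]
  simp only [e, Pi.single_apply, Fin.ext_iff]
  split_ifs <;> first | rfl | omega

end Mul11

section Derivations

variable {n : ℕ}

lemma isDer_of_forall_e (B : (Fin n → ℂ) →ₗ[ℂ] (Fin n → ℂ) →ₗ[ℂ] (Fin n → ℂ))
    (D : (Fin n → ℂ) →ₗ[ℂ] (Fin n → ℂ))
    (h : ∀ a b, D (B (e n a) (e n b)) = B (D (e n a)) (e n b) + B (e n a) (D (e n b))) :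
    IsDer (fun x y => B x y) D := by
  have hB : B.compr₂ D = B ∘ₗ D + B.compl₂ D :=
    LinearMap.ext_basis (Pi.basisFun ℂ (Fin n)) (Pi.basisFun ℂ (Fin n)) fun a b => by
      simpa [e] using h a b
  intro x y
  simpa using LinearMap.congr_fun₂ hB x y

lemma isDer_smulRight {μ : (Fin n → ℂ) → (Fin n → ℂ) → Fin n → ℂ}
    (hsl : ∀ (c : ℂ) x y, μ (c • x) y = c • μ x y) (hsr : ∀ (c : ℂ) x y, μ x (c • y) = c • μ x y)
    (f : (Fin n → ℂ) →ₗ[ℂ] ℂ) (v : Fin n → ℂ) (hf : ∀ x y, f (μ x y) = 0)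
    (hvl : ∀ y, μ v y = 0) (hvr : ∀ x, μ x v = 0) :
    IsDer μ (f.smulRight v) := by
  intro x y
  simp [hf, hsl, hsr, hvl, hvr]

end Derivations

section Mul11Derivations

variable {n : ℕ}

lemma isDer_mul11_of_forall_e (D : (Fin n → ℂ) →ₗ[ℂ] (Fin n → ℂ))
    (h : ∀ a b, D (mul11 n (e n a) (e n b)) =
      mul11 n (D (e n a)) (e n b) + mul11 n (e n a) (D (e n b))) :
    IsDer (mul11 n) D :=
  isDer_of_forall_e (LinearMap.mk₂ ℂ (mul11 n) (mul11_add_left n) (mul11_smul_left n)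
    (mul11_add_right n) (mul11_smul_right n)) D h

lemma isDer_proj_smulRight_e {A K : Fin n} (hA : (A : ℕ) = 0 ∨ n ≤ A + 1) (hK : n ≤ K + 2) :
    IsDer (mul11 n) ((LinearMap.proj A).smulRight (e n K)) := by
  refine isDer_smulRight (mul11_smul_left n) (mul11_smul_right n) _ _ (fun x y => ?_)
    (fun y => by rw [mul11_comm]; exact mul11_e_eq_zero y hK) (fun x => mul11_e_eq_zero x hK)
  rcases hA with hA | hA
  · exact mul11_apply_eq_zero_of_forall_lt x fun j hj => absurd hj (by simp [Fin.lt_def, hA])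
  · exact mul11_apply_eq_zero_of_le x y hA

/-- The derivation determined by `e 0 ↦ e d`; in the paper's 1-based indexing it sends
`e_i ↦ i e_{i+d}`. -/
noncomputable def shiftDer (n d : ℕ) : (Fin n → ℂ) →ₗ[ℂ] (Fin n → ℂ) where
  toFun x k :=
    if h : d ≤ k ∧ (k : ℕ) + 2 ≤ n then ((k - d + 1 : ℕ) : ℂ) * x ⟨k - d, by omega⟩ else 0
  map_add' x y := by
    funext k
    simp only [Pi.add_apply]
    split_ifs <;> ring
  map_smul' c x := by
    funext k
    simp only [Pi.smul_apply, smul_eq_mul, RingHom.id_apply]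
    split_ifs <;> ring

lemma shiftDer_apply (d : ℕ) (x : Fin n → ℂ) (k : Fin n) :
    shiftDer n d x k =
      if h : d ≤ k ∧ (k : ℕ) + 2 ≤ n then ((k - d + 1 : ℕ) : ℂ) * x ⟨k - d, by omega⟩ else 0 :=
  rfl

lemma isDer_shiftDer (d : ℕ) : IsDer (mul11 n) (shiftDer n d) := by
  refine isDer_mul11_of_forall_e _ fun a b => ?_
  funext k
  rw [Pi.add_apply, mul11_comm (e n a) (shiftDer n d (e n b)), mul11_e_apply, mul11_e_apply,
    shiftDer_apply]
  simp only [shiftDer_apply, mul11_e_apply]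
  simp only [e, Pi.single_apply, Fin.ext_iff]
  split_ifs <;> simp only [mul_zero, mul_one, add_zero] <;>
    first | (exfalso; omega) | (norm_cast; omega)

end Mul11Derivations

namespace IsDer

variable {n : ℕ} {D : (Fin n → ℂ) →ₗ[ℂ] (Fin n → ℂ)}

lemma apply_e_eq_zero_of_lt (hD : IsDer (mul11 n) D) {a : Fin n} (ha : (a : ℕ) + 2 ≤ n)
    {k : Fin n} (hk : k < a) : D (e n a) k = 0 := by
  induction a using WellFoundedLT.induction generalizing k with
  | _ a ih =>
  have hk' : (k : ℕ) < a := hk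
  have hprod : mul11 n (e n ⟨0, by omega⟩) (e n ⟨a - 1, by omega⟩) = e n a :=
    mul11_e_e (by simp; omega) ha
  rw [← hprod, hD, Pi.add_apply]
  have hleft : mul11 n (D (e n ⟨0, by omega⟩)) (e n ⟨a - 1, by omega⟩) k = 0 :=
    mul11_apply_eq_zero_of_forall_lt _ fun j hj =>
      Pi.single_eq_of_ne (Fin.ne_of_val_ne (by have := Fin.lt_def.1 hj; dsimp only; omega)) _
  have hright : mul11 n (e n ⟨0, by omega⟩) (D (e n ⟨a - 1, by omega⟩)) k = 0 :=
    mul11_apply_eq_zero_of_forall_lt _ fun j hj =>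
      ih _ (Fin.lt_def.2 (by dsimp only; omega)) (by dsimp only; omega)
        (Fin.lt_def.2 (by have := Fin.lt_def.1 hj; dsimp only; omega))
  rw [hleft, hright, add_zero]

lemma apply_e_eq_zero_of_le (hD : IsDer (mul11 n) D) {a : Fin n} (ha₁ : 1 ≤ (a : ℕ))
    (ha₂ : (a : ℕ) + 2 ≤ n) {k : Fin n} (hk : n ≤ k + 1) : D (e n a) k = 0 := by
  have hprod : mul11 n (e n ⟨0, by omega⟩) (e n ⟨a - 1, by omega⟩) = e n a :=
    mul11_e_e (by simp; omega) ha₂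
  rw [← hprod, hD, Pi.add_apply, mul11_apply_eq_zero_of_le _ _ hk,
    mul11_apply_eq_zero_of_le _ _ hk, add_zero]

lemma apply_e_eq_zero_of_le_add_two (hD : IsDer (mul11 n) D) {b : Fin n} (hb : n ≤ b + 2)
    {k : Fin n} (hk : (k : ℕ) + 3 ≤ n) : D (e n b) k = 0 := by
  have h := hD (e n ⟨0, by omega⟩) (e n b)
  rw [mul11_e_eq_zero _ hb, map_zero, mul11_e_eq_zero _ hb, zero_add, mul11_comm] at h
  have hk1 := congrFun h ⟨k + 1, by omega⟩
  rw [mul11_e_apply, dif_pos (by simp; omega)] at hk1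
  simpa using hk1.symm

end IsDer

section LocalDerivations

variable {n : ℕ}

noncomputable def derValues (n : ℕ) (x : Fin n → ℂ) : Submodule ℂ (Fin n → ℂ) :=
  (derSubmodule n (mul11 n) (mul11_add_left n) (mul11_add_right n) (mul11_smul_left n)
    (mul11_smul_right n)).map (LinearMap.applyₗ x)

lemma IsDer.apply_mem_derValues {D : (Fin n → ℂ) →ₗ[ℂ] (Fin n → ℂ)} (hD : IsDer (mul11 n) D)
    (x : Fin n → ℂ) : D x ∈ derValues n x :=
  ⟨D, hD, rfl⟩

lemma isLocDer_iff_forall_mem_derValues (Δ : (Fin n → ℂ) →ₗ[ℂ] (Fin n → ℂ)) :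
    IsLocDer (mul11 n) Δ ↔ ∀ x, Δ x ∈ derValues n x :=
  forall_congr' fun x =>
    ⟨fun ⟨_, hD, h⟩ => h ▸ hD.apply_mem_derValues x, fun ⟨D, hD, h⟩ => ⟨D, hD, h.symm⟩⟩

lemma mem_of_forall_e_mem {S : Submodule ℂ (Fin n → ℂ)} {v : Fin n → ℂ}
    (h : ∀ k, v k ≠ 0 → e n k ∈ S) : v ∈ S := by
  rw [pi_eq_sum_univ' v]
  refine Submodule.sum_mem _ fun k _ => ?_
  by_cases hk : v k = 0
  · simp [hk]
  · exact Submodule.smul_mem _ _ (h k hk)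

lemma e_mem_derValues {x : Fin n → ℂ} {m : Fin n} (hm : ∀ j < m, x j = 0) (hxm : x m ≠ 0)
    {K : Fin n} (hmK : m ≤ K) (hK : (K : ℕ) + 2 ≤ n) : e n K ∈ derValues n x := by
  induction K using WellFoundedGT.induction with
  | _ K ih =>
  have hmK' : (m : ℕ) ≤ K := hmK
  set c : ℂ := ((m + 1 : ℕ) : ℂ) * x m
  have hc : c ≠ 0 := mul_ne_zero (Nat.cast_ne_zero.2 (Nat.succ_ne_zero _)) hxm
  -- `shiftDer (K - m) x` is `c • e K` plus components along `e k` with `K < k ≤ n - 2` only.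
  have hcoord (k : Fin n) (hk : (k : ℕ) ≤ K ∨ n ≤ k + 1) :
      (shiftDer n (K - m) x - c • e n K) k = 0 := by
    rw [Pi.sub_apply, shiftDer_apply, Pi.smul_apply, e, Pi.single_apply]
    split_ifs with h₁ h₂ h₂
    · subst h₂
      have hidx : (⟨k - (k - m), by omega⟩ : Fin n) = m := Fin.ext (by dsimp only; omega)
      rw [hidx, Nat.sub_sub_self hmK', smul_eq_mul, mul_one, sub_self]
    · have hk' : (k : ℕ) < K := by have := Fin.val_ne_of_ne h₂; omega
      rw [hm _ (Fin.lt_def.2 (by dsimp only; omega))]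
      simp
    · exact absurd ⟨by rw [h₂]; omega, by rw [h₂]; omega⟩ h₁
    · simp
  have htail : shiftDer n (K - m) x - c • e n K ∈ derValues n x := by
    refine mem_of_forall_e_mem fun k hk => ?_
    have hKk : K < k := Fin.lt_def.2 (by by_contra h; exact hk (hcoord k (by omega)))
    exact ih k hKk (hmK.trans hKk.le) (by by_contra h; exact hk (hcoord k (by omega)))
  have hcK := Submodule.sub_mem _ ((isDer_shiftDer (K - m)).apply_mem_derValues x) htail
  rw [sub_sub_cancel] at hcK
  exact (Submodule.smul_mem_iff _ hc).1 hcK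

lemma e_mem_derValues_of_apply_ne_zero {x : Fin n → ℂ} {a K : Fin n} (hx : x a ≠ 0) (haK : a ≤ K)
    (hK : (K : ℕ) + 2 ≤ n) : e n K ∈ derValues n x := by
  obtain ⟨m, hxm, hmin⟩ := wellFounded_lt.has_min {j | x j ≠ 0} ⟨a, hx⟩
  exact e_mem_derValues (fun j hj => by_contra fun h => hmin j h hj) hxm
    ((not_lt.1 (hmin a hx)).trans haK) hK

lemma smul_e_mem_derValues (x : Fin n → ℂ) {a K : Fin n}
    (h : ((a : ℕ) ≤ K ∧ (K : ℕ) + 2 ≤ n) ∨ (((a : ℕ) = 0 ∨ n ≤ a + 1) ∧ n ≤ K + 2)) :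
    x a • e n K ∈ derValues n x := by
  rcases h with ⟨haK, hK⟩ | ⟨ha, hK⟩
  · by_cases hx : x a = 0
    · simp [hx]
    · exact Submodule.smul_mem _ _ (e_mem_derValues_of_apply_ne_zero hx haK hK)
  · exact (isDer_proj_smulRight_e ha hK).apply_mem_derValues x

lemma isLocDer_of_apply_e_ne_zero {Δ : (Fin n → ℂ) →ₗ[ℂ] (Fin n → ℂ)}
    (h : ∀ a K : Fin n, Δ (e n a) K ≠ 0 →
      ((a : ℕ) ≤ K ∧ (K : ℕ) + 2 ≤ n) ∨ (((a : ℕ) = 0 ∨ n ≤ a + 1) ∧ n ≤ K + 2)) :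
    IsLocDer (mul11 n) Δ := by
  refine (isLocDer_iff_forall_mem_derValues Δ).2 fun x => ?_
  have hsum : Δ x = ∑ a, ∑ K, Δ (e n a) K • (x a • e n K) := by
    conv_lhs => rw [pi_eq_sum_univ' x]
    simp only [map_sum, map_smul]
    refine Finset.sum_congr rfl fun a _ => ?_
    change x a • Δ (e n a) = _
    conv_lhs => rw [pi_eq_sum_univ' (Δ (e n a))]
    rw [Finset.smul_sum]
    exact Finset.sum_congr rfl fun K _ => smul_comm _ _ _
  rw [hsum]
  refine Submodule.sum_mem _ fun a _ => Submodule.sum_mem _ fun K _ => ?_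
  by_cases hz : Δ (e n a) K = 0
  · simp [hz]
  · exact Submodule.smul_mem _ _ (smul_e_mem_derValues x (h a K hz))

end LocalDerivations

theorem stmt16 (n : ℕ) (hn : 3 < n) (Δ : (Fin n → ℂ) →ₗ[ℂ] (Fin n → ℂ)) :
    IsLocDer (mul11 n) Δ ↔
      ((∀ a k : Fin n, 1 ≤ (a : ℕ) → (a : ℕ) ≤ n - 2 →
          ((k : ℕ) < (a : ℕ) ∨ (k : ℕ) = n - 1) → Δ (e n a) k = 0) ∧
       (∀ k : Fin n, (k : ℕ) < n - 2 → Δ (e n ⟨n - 1, by omega⟩) k = 0)) := by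
  constructor
  · intro hΔ
    refine ⟨fun a k ha₁ ha₂ hk => ?_, fun k hk => ?_⟩
    · obtain ⟨D, hD, hDa⟩ := hΔ (e n a)
      rw [hDa]
      rcases hk with hk | hk
      · exact hD.apply_e_eq_zero_of_lt (by omega) hk
      · exact hD.apply_e_eq_zero_of_le ha₁ (by omega) (by omega)
    · obtain ⟨D, hD, hDa⟩ := hΔ (e n ⟨n - 1, by omega⟩)
      rw [hDa]
      exact hD.apply_e_eq_zero_of_le_add_two (by dsimp only; omega) (by omega)
  · rintro ⟨hmid, htop⟩
    refine isLocDer_of_apply_e_ne_zero fun a k hz => ?_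
    have := a.isLt
    have := k.isLt
    by_cases ha : (a : ℕ) = n - 1
    · have hk : n - 2 ≤ (k : ℕ) := by
        by_contra hk
        exact hz (by rw [show a = ⟨n - 1, by omega⟩ from Fin.ext ha]; exact htop k (by omega))
      omega
    · by_cases ha₀ : (a : ℕ) = 0
      · omega
      · refine Or.inl ⟨?_, ?_⟩ <;> by_contra hk <;>
          exact hz (hmid a k (by omega) (by omega) (by omega))
end

section
/- Let μ₁,₁ⁿ (n > 3) be the complex algebra with basis e₁,…,eₙ and only nonzero products eᵢeⱼ = e_{i+j} for i+j ≤ n−1. Define ∇(∑ xᵢeᵢ) = f(x₁, xₙ)eₙ where f(z₁,zₙ) = z₁²/zₙ if zₙ ≠ 0 and 0 otherwise. Then ∇ is a 2-local derivation of μ₁,₁ⁿ which is not additive, hence not a derivation. -/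
noncomputable def f17 : ℂ → ℂ → ℂ := fun z1 zn => if zn ≠ 0 then z1 ^ 2 / zn else 0

noncomputable def nabla17 (n : ℕ) (hn : 0 < n) : (Fin n → ℂ) → (Fin n → ℂ) :=
  fun x => f17 (x ⟨0, hn⟩) (x ⟨n - 1, by omega⟩) • e n ⟨n - 1, by omega⟩

/-! Every map `x ↦ (α x₁ + β xₙ) eₙ` is a derivation, since products have no `e₁`- or
`eₙ`-component and `eₙ` annihilates everything. So `∇` is 2-local as soon as `f` agrees with a
linear form `α z₁ + β zₙ` at any two points of `ℂ²`. This holds because `f` is homogeneous of degree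
one: if the two points are independent, prescribe the values on their span; otherwise homogeneity
makes `f` linear along the line through them. Additivity fails since `∇(e₁ + eₙ) = eₙ` while
`∇e₁ = ∇eₙ = 0`. -/

section Homogeneous

variable {K V : Type*} [DivisionRing K] [AddCommGroup V] [Module K V] {f : V → K}

theorem exists_linearMap_apply_eq_of_homogeneous (hf : ∀ (t : K) v, f (t • v) = t * f v)
    (x : V) : ∃ φ : V →ₗ[K] K, φ x = f x := by
  by_cases hx : x = 0
  · exact ⟨0, by simpa [hx] using (hf 0 0).symm⟩
  · obtain ⟨φ, -, hφ⟩ := LinearMap.exists_extend_of_notMem (0 : (⊥ : Submodule K V) →ₗ[K] K)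
      (by simpa using hx) (f x)
    exact ⟨φ, hφ⟩

theorem exists_linearMap_apply_eq_apply_eq_of_homogeneous
    (hf : ∀ (t : K) v, f (t • v) = t * f v) (x y : V) :
    ∃ φ : V →ₗ[K] K, φ x = f x ∧ φ y = f y := by
  obtain ⟨φ, hφx⟩ := exists_linearMap_apply_eq_of_homogeneous hf x
  by_cases hy : y ∈ K ∙ x
  · obtain ⟨t, rfl⟩ := Submodule.mem_span_singleton.mp hy
    exact ⟨φ, hφx, by rw [map_smul, hφx, hf, smul_eq_mul]⟩
  · obtain ⟨ψ, hψ, hψy⟩ := LinearMap.exists_extend_of_notMem (φ ∘ₗ (K ∙ x).subtype) hy (f y)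
    refine ⟨ψ, ?_, hψy⟩
    rw [← hφx]
    exact LinearMap.congr_fun hψ ⟨x, Submodule.mem_span_singleton_self x⟩

end Homogeneous

theorem f17_mul_mul (t a b : ℂ) : f17 (t * a) (t * b) = t * f17 a b := by
  unfold f17
  by_cases ht : t = 0
  · simp [ht]
  by_cases hb : b = 0
  · simp [hb]
  · simp only [ne_eq, mul_eq_zero, ht, hb, or_self, not_false_eq_true, if_true]
    field_simp

section mul11

variable {n : ℕ}

theorem mul11_apply_eq_zero (x y : Fin n → ℂ) {k : Fin n} (hk : (k : ℕ) = 0 ∨ n ≤ k + 1) :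
    mul11 n x y k = 0 :=
  Finset.sum_eq_zero fun i _ => Finset.sum_eq_zero fun j _ => if_neg (by omega)

theorem mul11_smul_e_left (c : ℂ) {i : Fin n} (hi : n ≤ i + 2) (y : Fin n → ℂ) :
    mul11 n (c • e n i) y = 0 := by
  funext k
  refine Finset.sum_eq_zero fun i' _ => Finset.sum_eq_zero fun j _ => ?_
  by_cases h : i' = i
  · subst h
    exact if_neg (by omega)
  · simp [e, Pi.single_eq_of_ne h]

theorem mul11_smul_e_right (c : ℂ) {i : Fin n} (hi : n ≤ i + 2) (x : Fin n → ℂ) :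
    mul11 n x (c • e n i) = 0 := by
  funext k
  refine Finset.sum_eq_zero fun i' _ => Finset.sum_eq_zero fun j _ => ?_
  by_cases h : j = i
  · subst h
    exact if_neg (by omega)
  · simp [e, Pi.single_eq_of_ne h]

theorem isDer_mul11_smulRight {φ : (Fin n → ℂ) →ₗ[ℂ] ℂ} (hφ : ∀ x y, φ (mul11 n x y) = 0)
    {i : Fin n} (hi : n ≤ i + 2) : IsDer (mul11 n) (φ.smulRight (e n i)) := by
  intro x y
  simp only [LinearMap.smulRight_apply, hφ, zero_smul, mul11_smul_e_left _ hi,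
    mul11_smul_e_right _ hi, add_zero]

end mul11

theorem exists_isDer_mul11_eq_nabla17 {n : ℕ} (hn : 0 < n) (x y : Fin n → ℂ) :
    ∃ D : (Fin n → ℂ) →ₗ[ℂ] (Fin n → ℂ),
      IsDer (mul11 n) D ∧ nabla17 n hn x = D x ∧ nabla17 n hn y = D y := by
  let first : Fin n := ⟨0, hn⟩
  let last : Fin n := ⟨n - 1, by omega⟩
  let π : (Fin n → ℂ) →ₗ[ℂ] ℂ × ℂ := (LinearMap.proj first).prod (LinearMap.proj last)
  obtain ⟨φ, hφx, hφy⟩ := exists_linearMap_apply_eq_apply_eq_of_homogeneous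
    (f := fun p : ℂ × ℂ => f17 p.1 p.2) (fun t p => f17_mul_mul t p.1 p.2) (π x) (π y)
  have hπ : ∀ x y, π (mul11 n x y) = 0 := fun x y =>
    Prod.ext (mul11_apply_eq_zero x y (Or.inl rfl))
      (mul11_apply_eq_zero x y (Or.inr (by simp [last]; omega)))
  refine ⟨(φ ∘ₗ π).smulRight (e n last),
    isDer_mul11_smulRight (fun x y => by simp [hπ]) (by simp [last]; omega), ?_, ?_⟩
  · rw [LinearMap.smulRight_apply, LinearMap.comp_apply, hφx]; rfl
  · rw [LinearMap.smulRight_apply, LinearMap.comp_apply, hφy]; rfl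

theorem nabla17_not_additive {n : ℕ} (hn : 1 < n) :
    ¬ ∀ u v : Fin n → ℂ,
      nabla17 n (by omega) (u + v) = nabla17 n (by omega) u + nabla17 n (by omega) v := by
  intro h
  have hne : (⟨0, by omega⟩ : Fin n) ≠ ⟨n - 1, by omega⟩ := by simp [Fin.ext_iff]; omega
  have := congrFun (h (e n ⟨0, by omega⟩) (e n ⟨n - 1, by omega⟩)) ⟨n - 1, by omega⟩
  simp [nabla17, e, Pi.single_eq_of_ne hne, Pi.single_eq_of_ne hne.symm, f17] at this

theorem stmt17 (n : ℕ) (hn : 3 < n) :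
    (∀ x y : Fin n → ℂ, ∃ D : (Fin n → ℂ) →ₗ[ℂ] (Fin n → ℂ),
      IsDer (mul11 n) D ∧
        nabla17 n (by omega) x = D x ∧ nabla17 n (by omega) y = D y) ∧
    ¬ (∀ u v : Fin n → ℂ,
        nabla17 n (by omega) (u + v) = nabla17 n (by omega) u + nabla17 n (by omega) v) :=
  ⟨exists_isDer_mul11_eq_nabla17 (by omega), nabla17_not_additive (by omega)⟩
end
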